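/- Let p ≥ 2 and equip ℝ² with the metric d_p(x,y) = (|x₁−y₁|^p + |x₂−y₂|^p)^{1/p}. Suppose all agent points x_1, ..., x_n lie in the closed d_p-ball of radius r around center o, and let π ∈ ℝ² satisfy d_p(π, o) ≤ η·r. Then the Minimum Bounding Box output y, with coordinates y_j = max(min_i (x_i)_j, min(max_i (x_i)_j, π_j)) for j = 1,2, satisfies max_i d_p(x_i, y) ≤ (1 + min(2^{1/p}, η))·r. -/
import Mathlib

open Finset

/-- The l_p distance on ℝ², for a real exponent p. -/
noncomputable def dp (p : ℝ) (x y : ℝ × ℝ) : ℝ :=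
  (|x.1 - y.1| ^ p + |x.2 - y.2| ^ p) ^ (1/p)

/-- The Minimum Bounding Box mechanism: clamp each coordinate of the prediction to
the corresponding coordinate range of the agents. -/
noncomputable def bbox {n : ℕ} (x : Fin (n+1) → ℝ × ℝ) (π : ℝ × ℝ) : ℝ × ℝ :=
  (max (univ.inf' univ_nonempty fun i => (x i).1)
      (min (univ.sup' univ_nonempty fun i => (x i).1) π.1),
   max (univ.inf' univ_nonempty fun i => (x i).2)
      (min (univ.sup' univ_nonempty fun i => (x i).2) π.2))

lemma dp_eq_norm (p : ℝ) (hp : 1 ≤ p) (x y : ℝ × ℝ) :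
    dp p x y
      = @norm (WithLp (ENNReal.ofReal p) (ℝ × ℝ)) _
          ((WithLp.equiv (ENNReal.ofReal p) (ℝ × ℝ)).symm (x - y)) := by
  have h := WithLp.prod_norm_eq_add (p := ENNReal.ofReal p) (α := ℝ) (β := ℝ)
    (by rw [ENNReal.toReal_ofReal (by linarith)]; linarith)
    ((WithLp.equiv (ENNReal.ofReal p) (ℝ × ℝ)).symm (x - y))
  rw [ENNReal.toReal_ofReal (by linarith : (0:ℝ) ≤ p)] at h
  rw [dp, h]
  simp [Real.norm_eq_abs]

lemma dp_tri (p : ℝ) (hp : 1 ≤ p) (x y z : ℝ × ℝ) :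
    dp p x z ≤ dp p x y + dp p y z := by
  haveI : Fact (1 ≤ ENNReal.ofReal p) := ⟨ENNReal.one_le_ofReal.mpr hp⟩
  rw [dp_eq_norm p hp, dp_eq_norm p hp, dp_eq_norm p hp]
  have h : ((WithLp.equiv (ENNReal.ofReal p) (ℝ × ℝ)).symm (x - z))
      = ((WithLp.equiv (ENNReal.ofReal p) (ℝ × ℝ)).symm (x - y))
      + ((WithLp.equiv (ENNReal.ofReal p) (ℝ × ℝ)).symm (y - z)) := by
    simp [← map_add]
  rw [h]
  exact norm_add_le _ _

lemma dp_symm (p : ℝ) (x y : ℝ × ℝ) : dp p x y = dp p y x := by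
  rw [dp, dp, abs_sub_comm, abs_sub_comm y.2]

lemma dp_mono (p : ℝ) (hp : 1 ≤ p) {x y x' y' : ℝ × ℝ}
    (h1 : |x.1 - y.1| ≤ |x'.1 - y'.1|) (h2 : |x.2 - y.2| ≤ |x'.2 - y'.2|) :
    dp p x y ≤ dp p x' y' := by
  apply Real.rpow_le_rpow
    (by positivity)
    (add_le_add (Real.rpow_le_rpow (abs_nonneg _) h1 (by linarith))
      (Real.rpow_le_rpow (abs_nonneg _) h2 (by linarith)))
    (by positivity)

lemma coord_le_dp (p : ℝ) (hp : 1 ≤ p) (x y : ℝ × ℝ) :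
    |x.1 - y.1| ≤ dp p x y ∧ |x.2 - y.2| ≤ dp p x y := by
  have hp0 : p ≠ 0 := by linarith
  have h1 : |x.1 - y.1| = (|x.1 - y.1| ^ p) ^ (1/p) := by
    rw [← Real.rpow_mul (abs_nonneg _), mul_one_div_cancel hp0, Real.rpow_one]
  have h2 : |x.2 - y.2| = (|x.2 - y.2| ^ p) ^ (1/p) := by
    rw [← Real.rpow_mul (abs_nonneg _), mul_one_div_cancel hp0, Real.rpow_one]
  constructor
  · rw [h1]
    exact Real.rpow_le_rpow (by positivity)
      (le_add_of_nonneg_right (by positivity)) (by positivity)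
  · rw [h2]
    exact Real.rpow_le_rpow (by positivity)
      (le_add_of_nonneg_left (by positivity)) (by positivity)

lemma clamp_close (a b c t : ℝ) (h1 : a ≤ t) (h2 : t ≤ b) :
    |max a (min b c) - t| ≤ |c - t| := by
  rcases le_total c t with h|h <;> rw [abs_le] <;>
    constructor <;> simp [min_def, max_def] <;> split_ifs <;>
    simp [abs_of_nonneg, abs_of_nonpos, sub_nonneg, sub_nonpos, h] <;> linarith

/-- In the l_p plane (p ≥ 2), Minimum Bounding Box is a (1 + min(2^{1/p}, η))-approximation
for the maximum cost, where η bounds the prediction error. -/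
theorem stmt11 {n : ℕ} (p r η : ℝ) (hp : 2 ≤ p) (hr : 0 < r)
    (x : Fin (n+1) → ℝ × ℝ) (o π : ℝ × ℝ)
    (hball : ∀ i, dp p (x i) o ≤ r) (herr : dp p π o ≤ η * r) :
    ∀ i, dp p (x i) (bbox x π) ≤ (1 + min ((2:ℝ) ^ (1/p)) η) * r := by
  intro i
  have hp1 : (1:ℝ) ≤ p := by linarith
  have hp0 : p ≠ 0 := by linarith
  set y := bbox x π with hy
  -- coordinate bounds on agents relative to o
  have hcoord : ∀ j, |(x j).1 - o.1| ≤ r ∧ |(x j).2 - o.2| ≤ r := fun j =>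
    ⟨le_trans (coord_le_dp p hp1 (x j) o).1 (hball j),
     le_trans (coord_le_dp p hp1 (x j) o).2 (hball j)⟩
  -- bounds on y coordinates relative to o
  have hinf1 : o.1 - r ≤ univ.inf' univ_nonempty fun j => (x j).1 :=
    Finset.le_inf' _ _ fun j _ => by have := (hcoord j).1; rw [abs_le] at this; linarith
  have hsup1 : (univ.sup' univ_nonempty fun j => (x j).1) ≤ o.1 + r :=
    Finset.sup'_le _ _ fun j _ => by have := (hcoord j).1; rw [abs_le] at this; linarith
  have hinf2 : o.2 - r ≤ univ.inf' univ_nonempty fun j => (x j).2 :=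
    Finset.le_inf' _ _ fun j _ => by have := (hcoord j).2; rw [abs_le] at this; linarith
  have hsup2 : (univ.sup' univ_nonempty fun j => (x j).2) ≤ o.2 + r :=
    Finset.sup'_le _ _ fun j _ => by have := (hcoord j).2; rw [abs_le] at this; linarith
  have hib1 : (univ.inf' univ_nonempty fun j => (x j).1) ≤ univ.sup' univ_nonempty fun j => (x j).1 :=
    le_trans (Finset.inf'_le _ (Finset.mem_univ i)) (Finset.le_sup' (fun j => (x j).1) (Finset.mem_univ i))
  have hib2 : (univ.inf' univ_nonempty fun j => (x j).2) ≤ univ.sup' univ_nonempty fun j => (x j).2 :=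
    le_trans (Finset.inf'_le _ (Finset.mem_univ i)) (Finset.le_sup' (fun j => (x j).2) (Finset.mem_univ i))
  have hy1 : |y.1 - o.1| ≤ r := by
    rw [abs_le]
    constructor
    · have : (univ.inf' univ_nonempty fun j => (x j).1) ≤ y.1 := le_max_left _ _
      linarith
    · have : y.1 ≤ univ.sup' univ_nonempty fun j => (x j).1 :=
        max_le hib1 (min_le_left _ _)
      linarith
  have hy2 : |y.2 - o.2| ≤ r := by
    rw [abs_le]
    constructor
    · have : (univ.inf' univ_nonempty fun j => (x j).2) ≤ y.2 := le_max_left _ _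
      linarith
    · have : y.2 ≤ univ.sup' univ_nonempty fun j => (x j).2 :=
        max_le hib2 (min_le_left _ _)
      linarith
  -- Bound A : dp o y ≤ 2^(1/p) * r
  have hA : dp p o y ≤ (2:ℝ) ^ (1/p) * r := by
    have : dp p o y ≤ (r ^ p + r ^ p) ^ (1/p) := by
      apply Real.rpow_le_rpow (by positivity)
        (add_le_add (Real.rpow_le_rpow (abs_nonneg _) (by rw [abs_sub_comm]; exact hy1) (by linarith))
          (Real.rpow_le_rpow (abs_nonneg _) (by rw [abs_sub_comm]; exact hy2) (by linarith)))
        (by positivity)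
    calc dp p o y ≤ (r ^ p + r ^ p) ^ (1/p) := this
      _ = (2:ℝ) ^ (1/p) * r := by
          rw [show r ^ p + r ^ p = 2 * r ^ p by ring,
            Real.mul_rpow (by norm_num) (by positivity),
            ← Real.rpow_mul hr.le, mul_one_div_cancel hp0, Real.rpow_one]
  -- Bound B : dp (x i) y ≤ dp (x i) π  (clamping towards the box containing x i)
  have hB : dp p (x i) y ≤ dp p (x i) π := by
    have c1 : |y.1 - (x i).1| ≤ |π.1 - (x i).1| :=
      clamp_close _ _ _ _ (Finset.inf'_le _ (Finset.mem_univ i))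
        (Finset.le_sup' (fun j => (x j).1) (Finset.mem_univ i))
    have c2 : |y.2 - (x i).2| ≤ |π.2 - (x i).2| :=
      clamp_close _ _ _ _ (Finset.inf'_le _ (Finset.mem_univ i))
        (Finset.le_sup' (fun j => (x j).2) (Finset.mem_univ i))
    exact dp_mono p hp1 (by rwa [abs_sub_comm, abs_sub_comm (x i).1])
      (by rwa [abs_sub_comm, abs_sub_comm (x i).2])
  have boundA : dp p (x i) y ≤ (1 + (2:ℝ) ^ (1/p)) * r := by
    have := dp_tri p hp1 (x i) o y
    have := hball i
    nlinarith
  have boundB : dp p (x i) y ≤ (1 + η) * r := by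
    have h1 := dp_tri p hp1 (x i) o π
    have h2 := hball i
    rw [dp_symm p o π] at h1
    nlinarith
  rcases min_cases ((2:ℝ) ^ (1/p)) η with ⟨hm, _⟩ | ⟨hm, _⟩
  · rw [hm]; exact boundA
  · rw [hm]; exact boundB
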